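/- arXiv:2307.03844 — 4 statements merged into one kernel-verified Lean document; each statement's English description precedes it below -/
import Mathlib

section
/- Let F_B and F_S be Borel probability distributions on ℝ and let r = Pr_{b∼F_B, s∼F_S}[b ≥ s] with r > 0. Then b(1 − r/2) ≥ s(r/2), where b and s are the quantile functions of F_B and F_S respectively. -/
open MeasureTheory

/-- The quantile function of a Borel probability distribution on ℝ:
`quantile μ q = inf {x : μ(-∞, x] ≥ q}`. -/
noncomputable def quantile (μ : Measure ℝ) (q : ℝ) : ℝ :=
  sInf {x : ℝ | q ≤ (μ (Set.Iic x)).toReal}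

open Set Filter

-- The CDF tends to 0 at -∞.
lemma measure_Iic_tendsto_atBot (μ : Measure ℝ) [IsProbabilityMeasure μ] :
    Tendsto (fun x => μ (Iic x)) atBot (nhds 0) := by
  have h := tendsto_measure_iInter_atBot (μ := μ) (s := fun x : ℝ => Iic x)
    (fun i => (measurableSet_Iic).nullMeasurableSet) (fun a b hab => Iic_subset_Iic.2 hab)
    ⟨0, measure_ne_top μ _⟩
  have : (⋂ x : ℝ, Iic x) = (∅ : Set ℝ) := by
    ext y; simp only [mem_iInter, mem_Iic, mem_empty_iff_false, iff_false, not_forall]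
    exact ⟨y - 1, by linarith⟩
  rwa [this, measure_empty] at h

lemma quantile_mem_aux (μ : Measure ℝ) [IsProbabilityMeasure μ] {q : ℝ} (hq0 : 0 < q)
    (hq1 : q < 1) : ∃ x, q ≤ (μ (Iic x)).toReal := by
  have h := tendsto_measure_Iic_atTop (μ := μ)
  rw [measure_univ] at h
  have hlt : ENNReal.ofReal q < 1 := by
    rw [← ENNReal.ofReal_one]
    exact ENNReal.ofReal_lt_ofReal_iff_of_nonneg hq0.le |>.2 hq1
  have := h.eventually_const_lt hlt
  obtain ⟨x, hx⟩ := this.exists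
  exact ⟨x, by
    have := ENNReal.toReal_mono (measure_ne_top μ _) hx.le
    rwa [ENNReal.toReal_ofReal hq0.le] at this⟩

lemma quantile_bddBelow (μ : Measure ℝ) [IsProbabilityMeasure μ] {q : ℝ} (hq0 : 0 < q) :
    BddBelow {x : ℝ | q ≤ (μ (Iic x)).toReal} := by
  have h := measure_Iic_tendsto_atBot μ
  have hlt : (0 : ENNReal) < ENNReal.ofReal q := ENNReal.ofReal_pos.2 hq0
  obtain ⟨m, hm⟩ := (h.eventually_lt_const hlt).exists
  refine ⟨m, fun x hx => ?_⟩
  by_contra hxm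
  push_neg at hxm
  have hmono : μ (Iic x) ≤ μ (Iic m) := measure_mono (Iic_subset_Iic.2 hxm.le)
  have : (μ (Iic x)).toReal < q := by
    have := lt_of_le_of_lt hmono hm
    exact ENNReal.toReal_lt_of_lt_ofReal this
  exact absurd hx (not_le.2 this)

theorem quantile_dominance' (μB μS : Measure ℝ)
    [IsProbabilityMeasure μB] [IsProbabilityMeasure μS]
    (r : ℝ) (hr : r = ((μB.prod μS) {p : ℝ × ℝ | p.2 ≤ p.1}).toReal) (hr0 : 0 < r) :
    sInf {x : ℝ | r / 2 ≤ (μS (Iic x)).toReal} ≤ sInf {x : ℝ | 1 - r / 2 ≤ (μB (Iic x)).toReal} := by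
  have hr1 : r ≤ 1 := by
    rw [hr]
    have : (μB.prod μS) {p : ℝ × ℝ | p.2 ≤ p.1} ≤ 1 := prob_le_one
    simpa using ENNReal.toReal_mono ENNReal.one_ne_top this
  by_contra hlt
  push_neg at hlt
  obtain ⟨t, htB, htS⟩ := exists_between hlt
  -- Step A: μS (Iic t) < r/2
  have hA : (μS (Iic t)).toReal < r / 2 := by
    by_contra hA
    push_neg at hA
    have : sInf {x : ℝ | r / 2 ≤ (μS (Iic x)).toReal} ≤ t :=
      csInf_le (quantile_bddBelow μS (by linarith)) hA
    linarith
  -- Step B: ∃ x < t in the B-set, hence μB (Iio t) ≥ 1 - r/2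
  have hBne : {x : ℝ | 1 - r / 2 ≤ (μB (Iic x)).toReal}.Nonempty :=
    quantile_mem_aux μB (by linarith) (by linarith)
  obtain ⟨x, hxmem, hxt⟩ : ∃ x ∈ {x : ℝ | 1 - r / 2 ≤ (μB (Iic x)).toReal}, x < t := by
    by_contra hc
    push_neg at hc
    have : t ≤ sInf {x : ℝ | 1 - r / 2 ≤ (μB (Iic x)).toReal} :=
      le_csInf hBne fun y hy => hc y hy
    linarith
  have hB : 1 - r / 2 ≤ (μB (Iio t)).toReal := by
    refine le_trans hxmem (ENNReal.toReal_mono (measure_ne_top μB _) ?_)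
    exact measure_mono fun y hy => lt_of_le_of_lt hy hxt
  -- Main estimate: r ≤ μB (Ici t) + μS (Iic t)
  have hsub : {p : ℝ × ℝ | p.2 ≤ p.1} ⊆ (Ici t ×ˢ univ) ∪ (univ ×ˢ Iic t) := by
    rintro ⟨b, s⟩ h
    simp only [mem_setOf_eq] at h
    rcases le_or_gt s t with hs | hs
    · exact Or.inr ⟨mem_univ _, hs⟩
    · exact Or.inl ⟨le_trans hs.le h, mem_univ _⟩
  have hmeas : (μB.prod μS) {p : ℝ × ℝ | p.2 ≤ p.1} ≤ μB (Ici t) + μS (Iic t) := by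
    calc (μB.prod μS) {p : ℝ × ℝ | p.2 ≤ p.1}
        ≤ (μB.prod μS) ((Ici t ×ˢ univ) ∪ (univ ×ˢ Iic t)) := measure_mono hsub
      _ ≤ (μB.prod μS) (Ici t ×ˢ univ) + (μB.prod μS) (univ ×ˢ Iic t) := measure_union_le _ _
      _ = μB (Ici t) + μS (Iic t) := by
          rw [Measure.prod_prod, Measure.prod_prod, measure_univ, measure_univ, mul_one, one_mul]
  have hrle : r ≤ (μB (Ici t)).toReal + (μS (Iic t)).toReal := by
    rw [hr, ← ENNReal.toReal_add (measure_ne_top μB _) (measure_ne_top μS _)]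
    exact ENNReal.toReal_mono (by
      exact ENNReal.add_ne_top.2 ⟨measure_ne_top μB _, measure_ne_top μS _⟩) hmeas
  have hcompl : (μB (Ici t)).toReal = 1 - (μB (Iio t)).toReal := by
    have : μB (Ici t) + μB (Iio t) = 1 := by
      rw [← measure_univ (μ := μB)]
      rw [← measure_union (by simp [disjoint_left]) measurableSet_Iio]
      congr 1
      ext y; simp [le_or_gt]
    have h1 : (μB (Ici t)).toReal + (μB (Iio t)).toReal = 1 := by
      rw [← ENNReal.toReal_add (measure_ne_top μB _) (measure_ne_top μB _), this,
        ENNReal.toReal_one]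
    linarith
  rw [hcompl] at hrle
  linarith

/-- Let `F_B, F_S` be Borel probability distributions on ℝ and let
`r = Pr_{b∼F_B, s∼F_S}[b ≥ s] > 0`. Then `b(1 - r/2) ≥ s(r/2)`, where `b` and `s` are
the quantile functions of `F_B` and `F_S` respectively. -/
theorem quantile_dominance (μB μS : Measure ℝ)
    [IsProbabilityMeasure μB] [IsProbabilityMeasure μS]
    (r : ℝ) (hr : r = ((μB.prod μS) {p : ℝ × ℝ | p.2 ≤ p.1}).toReal) (hr0 : 0 < r) :
    quantile μS (r / 2) ≤ quantile μB (1 - r / 2) :=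
  quantile_dominance' μB μS r hr hr0
end

section
/- Let N ≥ 1 and c ≥ 1 be integers, let I ⊆ {1,…,N} and K ⊆ {1,…,N} \ I with c ≤ N − |K|, and let X be a uniformly random subset of {1,…,N} of size c. Then for every integer r ≥ 0, Pr[|X ∩ I| ≥ r | X ∩ K = ∅] ≥ Pr[|X ∩ I| ≥ r]. -/
/-!
Conditioned on `X ∩ K = ∅`, `X` is a uniform `c`-subset of `univ \ K`, so it suffices to see that
deleting one element `k ∉ I` from the ground set cannot lower the probability of the increasing
event `r ≤ |X ∩ I|`. A uniform `c`-subset of `insert k M` is either a `c`-subset of `M` or `k`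
together with a `(c - 1)`-subset of `M`, and the event does not see `k`; so the step reduces to the
fact that an increasing family fills a larger proportion of the `(n + 1)`-subsets of `M` than of the
`n`-subsets, which follows by double counting the pairs `Y ⊂ Z` with `|Y| = n`, `|Z| = n + 1`.
-/

open Finset

section UniformSubset

variable {α : Type*} [DecidableEq α] {P : Finset α → Prop} [DecidablePred P]

noncomputable def uniformSubsetProb (P : Finset α → Prop) [DecidablePred P] (M : Finset α)
    (n : ℕ) : ℝ :=
  #{X ∈ M.powersetCard n | P X} / #(M.powersetCard n)

theorem card_filter_powersetCard_mul_le (hP : Monotone P) (M : Finset α) (n : ℕ) :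
    #{Y ∈ M.powersetCard n | P Y} * (#M - n) ≤ #{Z ∈ M.powersetCard (n + 1) | P Z} * (n + 1) := by
  refine card_mul_le_card_mul (· ⊆ ·) (fun Y hY => ?_) (fun Z hZ => ?_)
  · obtain ⟨hYM, hYn⟩ := mem_powersetCard.1 (mem_filter.1 hY).1
    rw [← hYn, ← card_sdiff_of_subset hYM,
      ← card_image_of_injOn ((insert_inj_on Y).mono fun x hx => (mem_sdiff.1 hx).2)]
    refine card_le_card fun Z hZ => ?_
    obtain ⟨x, hx, rfl⟩ := mem_image.1 hZ
    obtain ⟨hxM, hxY⟩ := mem_sdiff.1 hx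
    simp only [mem_bipartiteAbove, mem_filter, mem_powersetCard]
    exact ⟨⟨⟨insert_subset hxM hYM, by rw [card_insert_of_notMem hxY, hYn]⟩,
      hP (subset_insert x Y) (mem_filter.1 hY).2⟩, subset_insert x Y⟩
  · obtain ⟨-, hZn⟩ := mem_powersetCard.1 (mem_filter.1 hZ).1
    calc #{Y ∈ {Y ∈ M.powersetCard n | P Y} | Y ⊆ Z} ≤ #(Z.powersetCard n) :=
          card_le_card fun Y hY => by
            simp only [mem_filter, mem_powersetCard] at hY ⊢
            exact ⟨hY.2, hY.1.1.2⟩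
      _ = n + 1 := by rw [card_powersetCard, hZn, Nat.choose_succ_self_right]

theorem card_filter_powersetCard_mul_choose_le (hP : Monotone P) (M : Finset α) (n : ℕ) :
    #{Y ∈ M.powersetCard n | P Y} * (#M).choose (n + 1) ≤
      #{Z ∈ M.powersetCard (n + 1) | P Z} * (#M).choose n := by
  refine Nat.le_of_mul_le_mul_right ?_ n.add_one_pos
  calc #{Y ∈ M.powersetCard n | P Y} * (#M).choose (n + 1) * (n + 1)
      = #{Y ∈ M.powersetCard n | P Y} * (#M - n) * (#M).choose n := by
        rw [mul_assoc, Nat.choose_succ_right_eq]; ring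
    _ ≤ #{Z ∈ M.powersetCard (n + 1) | P Z} * (n + 1) * (#M).choose n :=
        Nat.mul_le_mul_right _ (card_filter_powersetCard_mul_le hP M n)
    _ = _ := by ring

theorem card_filter_powersetCard_succ_insert {k : α} {M : Finset α} (hkM : k ∉ M)
    (hk : ∀ Y, P (insert k Y) ↔ P Y) (n : ℕ) :
    #{X ∈ (insert k M).powersetCard (n + 1) | P X} =
      #{X ∈ M.powersetCard (n + 1) | P X} + #{X ∈ M.powersetCard n | P X} := by
  have hinj : Set.InjOn (insert k) (M.powersetCard n : Set (Finset α)) := fun Y₁ h₁ Y₂ h₂ h => by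
    have hk₁ : k ∉ Y₁ := fun h => hkM ((mem_powersetCard.1 h₁).1 h)
    have hk₂ : k ∉ Y₂ := fun h => hkM ((mem_powersetCard.1 h₂).1 h)
    rw [← erase_insert hk₁, ← erase_insert hk₂, h]
  have hdisj : Disjoint (M.powersetCard (n + 1)) ((M.powersetCard n).image (insert k)) := by
    refine disjoint_left.2 fun X hX hX' => ?_
    obtain ⟨Y, -, rfl⟩ := mem_image.1 hX'
    exact hkM ((mem_powersetCard.1 hX).1 (mem_insert_self k Y))
  rw [powersetCard_succ_insert hkM, filter_union, card_union_of_disjoint (hdisj.mono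
    (filter_subset _ _) (filter_subset _ _)), filter_image, card_image_of_injOn
    (hinj.mono (filter_subset _ _))]
  simp only [hk]

theorem uniformSubsetProb_insert_le (hP : Monotone P) {k : α} (hk : ∀ Y, P (insert k Y) → P Y)
    {M : Finset α} (hkM : k ∉ M) {c : ℕ} (hc : c ≤ #M) :
    uniformSubsetProb P (insert k M) c ≤ uniformSubsetProb P M c := by
  rcases c with _ | n
  · simp only [uniformSubsetProb, powersetCard_zero, le_refl]
  have hpos : (0 : ℝ) < (#M).choose (n + 1) := by exact_mod_cast Nat.choose_pos hc
  have hmono := card_filter_powersetCard_mul_choose_le hP M n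
  simp only [uniformSubsetProb, card_powersetCard, card_insert_of_notMem hkM,
    card_filter_powersetCard_succ_insert hkM (fun Y => ⟨hk Y, hP (subset_insert k Y)⟩),
    Nat.choose_succ_succ, Nat.cast_add]
  rw [div_le_div_iff₀ (by positivity) hpos]
  have : (#{X ∈ M.powersetCard n | P X} : ℝ) * (#M).choose (n + 1) ≤
      #{X ∈ M.powersetCard (n + 1) | P X} * (#M).choose n := by exact_mod_cast hmono
  linarith

theorem uniformSubsetProb_le_erase (hP : Monotone P) {k : α} (hk : ∀ Y, P (insert k Y) → P Y)
    {M : Finset α} {c : ℕ} (hc : c ≤ #(M.erase k)) :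
    uniformSubsetProb P M c ≤ uniformSubsetProb P (M.erase k) c := by
  by_cases hkM : k ∈ M
  · conv_lhs => rw [← insert_erase hkM]
    exact uniformSubsetProb_insert_le hP hk (notMem_erase k M) hc
  · rw [erase_eq_of_notMem hkM]

theorem uniformSubsetProb_le_sdiff (hP : Monotone P) {K : Finset α}
    (hK : ∀ k ∈ K, ∀ Y, P (insert k Y) → P Y) {M : Finset α} {c : ℕ} (hc : c ≤ #(M \ K)) :
    uniformSubsetProb P M c ≤ uniformSubsetProb P (M \ K) c := by
  induction K using Finset.induction_on with
  | empty => rw [sdiff_empty]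
  | insert k K _ ih =>
    rw [sdiff_insert] at hc ⊢
    calc uniformSubsetProb P M c
        ≤ uniformSubsetProb P (M \ K) c :=
          ih (fun j hj => hK j (mem_insert_of_mem hj)) (hc.trans card_erase_le)
      _ ≤ uniformSubsetProb P ((M \ K).erase k) c :=
          uniformSubsetProb_le_erase hP (hK k (mem_insert_self k K)) hc

theorem filter_powersetCard_inter_eq_empty (M K : Finset α) (n : ℕ) :
    {X ∈ M.powersetCard n | X ∩ K = ∅} = (M \ K).powersetCard n := by
  ext X
  simp only [mem_filter, mem_powersetCard, subset_sdiff, ← disjoint_iff_inter_eq_empty]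
  tauto

end UniformSubset

theorem conditional_count_lower_bound_general (N c : ℕ)
    (I K : Finset (Fin N)) (hK : K ⊆ Finset.univ \ I) (hcK : c ≤ N - K.card)
    (r : ℕ) :
    ((((Finset.univ : Finset (Fin N)).powersetCard c).filter
          (fun X => r ≤ (X ∩ I).card)).card : ℝ) /
        (((Finset.univ : Finset (Fin N)).powersetCard c).card : ℝ) ≤
      ((((Finset.univ : Finset (Fin N)).powersetCard c).filter
          (fun X => r ≤ (X ∩ I).card ∧ X ∩ K = ∅)).card : ℝ) /
        ((((Finset.univ : Finset (Fin N)).powersetCard c).filter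
          (fun X => X ∩ K = ∅)).card : ℝ) := by
  have hP : Monotone fun X : Finset (Fin N) => r ≤ #(X ∩ I) :=
    fun X Y hXY hX => hX.trans (card_le_card (inter_subset_inter_right hXY))
  have hKI : ∀ k ∈ K, ∀ Y, r ≤ #(insert k Y ∩ I) → r ≤ #(Y ∩ I) := fun k hk Y => by
    rw [insert_inter_of_notMem (mem_sdiff.1 (hK hk)).2]
    exact id
  have hc : c ≤ #((univ : Finset (Fin N)) \ K) := by rwa [card_univ_sdiff, Fintype.card_fin]
  have hcond : {X ∈ (univ : Finset (Fin N)).powersetCard c | r ≤ #(X ∩ I) ∧ X ∩ K = ∅} =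
      {X ∈ {X ∈ (univ : Finset (Fin N)).powersetCard c | X ∩ K = ∅} | r ≤ #(X ∩ I)} := by
    rw [filter_filter]
    simp only [and_comm]
  rw [hcond, filter_powersetCard_inter_eq_empty]
  exact uniformSubsetProb_le_sdiff hP hKI hc

/-- Let `X` be a uniformly random subset of `{1,…,N}` of size `c`,
`I ⊆ {1,…,N}` and `K ⊆ {1,…,N} \ I` with `c ≤ N − |K|`. Then for every `r ≥ 0`,
`Pr[|X ∩ I| ≥ r | X ∩ K = ∅] ≥ Pr[|X ∩ I| ≥ r]`. -/
theorem conditional_count_lower_bound (N c : ℕ) (hN : 1 ≤ N) (hc : 1 ≤ c)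
    (I K : Finset (Fin N)) (hK : K ⊆ Finset.univ \ I) (hcK : c ≤ N - K.card)
    (r : ℕ) :
    ((((Finset.univ : Finset (Fin N)).powersetCard c).filter
          (fun X => r ≤ (X ∩ I).card)).card : ℝ) /
        (((Finset.univ : Finset (Fin N)).powersetCard c).card : ℝ) ≤
      ((((Finset.univ : Finset (Fin N)).powersetCard c).filter
          (fun X => r ≤ (X ∩ I).card ∧ X ∩ K = ∅)).card : ℝ) /
        ((((Finset.univ : Finset (Fin N)).powersetCard c).filter
          (fun X => X ∩ K = ∅)).card : ℝ) :=
  conditional_count_lower_bound_general N c I K hK hcK r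
end

section
/- Let N, I, p be positive integers with N ≥ max{I, p}, and let k ≥ 0 be an integer with N − k ≥ max{I, p}. Then for every integer r ≥ 0, Σ_{t = max{0, p−(N−I)}}^{r} C(I,t)·C(N−I, p−t)/C(N,p) ≥ Σ_{t = max{0, p−(N−k−I)}}^{r} C(I,t)·C(N−k−I, p−t)/C(N−k, p). -/
open Finset

private lemma step_id (I m s b : ℕ) (h : s + b ≤ I + m) :
    (I + m - (s + b)) * (I.choose s * (m + 1).choose (b + 1)) +
        s * (I.choose s * m.choose (b + 1)) =
      (I + m + 1) * (I.choose s * m.choose (b + 1)) +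
        (s + 1) * (I.choose (s + 1) * m.choose b) := by
  have key1 : ((s : ℤ) + 1) * I.choose (s + 1) = ((I : ℤ) - s) * I.choose s := by
    rcases le_or_gt s I with hs | hs
    · have := Nat.choose_succ_right_eq I s
      have := congrArg (fun x : ℕ => (x : ℤ)) this
      push_cast [Nat.cast_sub hs] at this
      linarith
    · rw [Nat.choose_eq_zero_of_lt hs, Nat.choose_eq_zero_of_lt (by omega)]
      push_cast; ring
  have key2 : ((b : ℤ) + 1) * m.choose (b + 1) = ((m : ℤ) - b) * m.choose b := by
    rcases le_or_gt b m with hs | hs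
    · have := Nat.choose_succ_right_eq m b
      have := congrArg (fun x : ℕ => (x : ℤ)) this
      push_cast [Nat.cast_sub hs] at this
      linarith
    · rw [Nat.choose_eq_zero_of_lt hs, Nat.choose_eq_zero_of_lt (by omega)]
      push_cast; ring
  have pascal : (m + 1).choose (b + 1) = m.choose b + m.choose (b + 1) :=
    Nat.choose_succ_succ m b
  rw [pascal]
  zify [h]
  linear_combination (-(I.choose s : ℤ)) * key2 + (-(m.choose b : ℤ)) * key1

private lemma cdf_id (N I p : ℕ) (hI : I + 1 ≤ N) (hp : p ≤ N) :
    ∀ r, r < p →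
      (N - p) * ∑ t ∈ range (r + 1), I.choose t * (N - I).choose (p - t) =
        N * ∑ t ∈ range (r + 1), I.choose t * (N - 1 - I).choose (p - t) +
          (r + 1) * (I.choose (r + 1) * (N - 1 - I).choose (p - 1 - r)) := by
  intro r
  induction r with
  | zero =>
    intro hr
    have hstep := step_id I (N - 1 - I) 0 (p - 1) (by omega)
    have e1 : N - 1 - I + 1 = N - I := by omega
    have e2 : p - 1 + 1 = p := by omega
    have e3 : I + (N - 1 - I) - (0 + (p - 1)) = N - p := by omega
    have e4 : I + (N - 1 - I) + 1 = N := by omega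
    rw [e1, e2, e3, e4] at hstep
    simp only [Finset.sum_range_one, Nat.sub_zero, Nat.choose_zero_right, one_mul,
      Nat.zero_mul, Nat.add_zero, Nat.zero_add] at hstep ⊢
    omega
  | succ n ih =>
    intro hr
    have ihn := ih (by omega)
    rw [Finset.sum_range_succ (fun t => I.choose t * (N - I).choose (p - t)) (n + 1),
      Finset.sum_range_succ (fun t => I.choose t * (N - 1 - I).choose (p - t)) (n + 1),
      Nat.mul_add, Nat.mul_add, ihn]
    have hstep := step_id I (N - 1 - I) (n + 1) (p - (n + 2)) (by omega)
    have e1 : N - 1 - I + 1 = N - I := by omega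
    have e2 : p - (n + 2) + 1 = p - (n + 1) := by omega
    have e3 : I + (N - 1 - I) - (n + 1 + (p - (n + 2))) = N - p := by omega
    have e4 : I + (N - 1 - I) + 1 = N := by omega
    rw [e1, e2, e3, e4] at hstep
    have e5 : p - 1 - n = p - (n + 1) := by omega
    have e6 : p - 1 - (n + 1) = p - (n + 2) := by omega
    rw [e5, e6]
    linarith [hstep]

private lemma one_step (M I p r : ℕ) (hI : I ≤ M) (hp : p ≤ M) (hr : r < p) :
    ∑ t ∈ range (r + 1), (I.choose t * (M - I).choose (p - t) : ℝ) / (M.choose p : ℝ) ≤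
      ∑ t ∈ range (r + 1), (I.choose t * (M + 1 - I).choose (p - t) : ℝ) /
        ((M + 1).choose p : ℝ) := by
  have hA := cdf_id (M + 1) I p (by omega) (by omega) r hr
  have hMI : M + 1 - 1 - I = M - I := by omega
  rw [hMI] at hA
  have hc : 0 < M.choose p := Nat.choose_pos hp
  have hC : 0 < (M + 1).choose p := Nat.choose_pos (by omega)
  have hrel : (M + 1) * M.choose p = (M + 1 - p) * (M + 1).choose p := by
    have h1 := Nat.add_one_mul_choose_eq M p
    have h2 := Nat.choose_succ_right_eq (M + 1) p
    calc (M + 1) * M.choose p = (M + 1).choose (p + 1) * (p + 1) := h1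
      _ = (M + 1).choose p * (M + 1 - p) := h2
      _ = (M + 1 - p) * (M + 1).choose p := Nat.mul_comm _ _
  set A := ∑ t ∈ range (r + 1), I.choose t * (M - I).choose (p - t) with hAdef
  set B := ∑ t ∈ range (r + 1), I.choose t * (M + 1 - I).choose (p - t) with hBdef
  have hnat : A * (M + 1).choose p ≤ B * M.choose p := by
    have hq : 0 < M + 1 - p := by omega
    have key : (M + 1 - p) * (A * (M + 1).choose p) ≤ (M + 1 - p) * (B * M.choose p) := by
      calc (M + 1 - p) * (A * (M + 1).choose p)
          = A * ((M + 1 - p) * (M + 1).choose p) := by ring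
        _ = A * ((M + 1) * M.choose p) := by rw [← hrel]
        _ = ((M + 1) * A) * M.choose p := by ring
        _ ≤ ((M + 1) * A + (r + 1) * (I.choose (r + 1) * (M - I).choose (p - 1 - r))) *
              M.choose p := by
            exact Nat.mul_le_mul_right _ (Nat.le_add_right _ _)
        _ = ((M + 1 - p) * B) * M.choose p := by rw [← hA]
        _ = (M + 1 - p) * (B * M.choose p) := by ring
    exact Nat.le_of_mul_le_mul_left key hq
  have hs1 : ∑ t ∈ range (r + 1), (I.choose t * (M - I).choose (p - t) : ℝ) = (A : ℝ) := by
    rw [hAdef]; push_cast; ring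
  have hs2 : ∑ t ∈ range (r + 1), (I.choose t * (M + 1 - I).choose (p - t) : ℝ) = (B : ℝ) := by
    rw [hBdef]; push_cast; ring
  rw [← Finset.sum_div, ← Finset.sum_div, hs1, hs2,
    div_le_div_iff₀ (by exact_mod_cast hc) (by exact_mod_cast hC)]
  exact_mod_cast hnat

private lemma mono_pop (I p r M0 : ℕ) (hI : I ≤ M0) (hp : p ≤ M0) (hr : r < p) :
    ∀ M, M0 ≤ M →
      ∑ t ∈ range (r + 1), (I.choose t * (M0 - I).choose (p - t) : ℝ) / (M0.choose p : ℝ) ≤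
        ∑ t ∈ range (r + 1), (I.choose t * (M - I).choose (p - t) : ℝ) / (M.choose p : ℝ) := by
  intro M hM
  induction M, hM using Nat.le_induction with
  | base => exact le_refl _
  | succ M hM ih =>
    exact ih.trans (one_step M I p r (hI.trans hM) (hp.trans hM) hr)

private lemma convert_sum (M I p r : ℕ) (hr : r < p) :
    ∑ t ∈ Finset.Icc (p - (M - I)) r,
        (if t ≤ p then (I.choose t * (M - I).choose (p - t) : ℝ) else 0) / (M.choose p : ℝ) =
      ∑ t ∈ range (r + 1), (I.choose t * (M - I).choose (p - t) : ℝ) / (M.choose p : ℝ) := by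
  have hIcc : range (r + 1) = Finset.Icc 0 r := by
    rw [Finset.range_eq_Ico, Finset.Ico_add_one_right_eq_Icc]
  rw [hIcc]
  rw [Finset.sum_subset (Finset.Icc_subset_Icc_left (Nat.zero_le _))]
  · apply Finset.sum_congr rfl
    intro t ht
    simp only [Finset.mem_Icc] at ht
    rw [if_pos (by omega)]
  · intro t ht hts
    simp only [Finset.mem_Icc] at ht hts
    have htlo : t < p - (M - I) := by omega
    have : (M - I).choose (p - t) = 0 := Nat.choose_eq_zero_of_lt (by omega)
    simp [this]

private lemma full_sum (M I p r : ℕ) (hI : I ≤ M) (hp : p ≤ M) (hr : p ≤ r) :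
    ∑ t ∈ Finset.Icc (p - (M - I)) r,
        (if t ≤ p then (I.choose t * (M - I).choose (p - t) : ℝ) else 0) / (M.choose p : ℝ) = 1 := by
  have hIcc : range (r + 1) = Finset.Icc 0 r := by
    rw [Finset.range_eq_Ico, Finset.Ico_add_one_right_eq_Icc]
  have h1 : ∑ t ∈ Finset.Icc (p - (M - I)) r,
      (if t ≤ p then (I.choose t * (M - I).choose (p - t) : ℝ) else 0) / (M.choose p : ℝ)
      = ∑ t ∈ range (r + 1),
      (if t ≤ p then (I.choose t * (M - I).choose (p - t) : ℝ) else 0) / (M.choose p : ℝ) := by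
    rw [hIcc]
    refine Finset.sum_subset (Finset.Icc_subset_Icc_left (Nat.zero_le _)) ?_
    intro t ht hts
    simp only [Finset.mem_Icc] at ht hts
    have : (M - I).choose (p - t) = 0 := Nat.choose_eq_zero_of_lt (by omega)
    simp [this]
  have h2 : ∑ t ∈ range (r + 1),
      (if t ≤ p then (I.choose t * (M - I).choose (p - t) : ℝ) else 0) / (M.choose p : ℝ)
      = ∑ t ∈ range (p + 1), (I.choose t * (M - I).choose (p - t) : ℝ) / (M.choose p : ℝ) := by
    rw [← Finset.sum_subset (Finset.range_subset_range.2 (Nat.succ_le_succ hr))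
      (fun t ht hts => by
        simp only [Finset.mem_range] at ht hts
        rw [if_neg (by omega), zero_div])]
    refine Finset.sum_congr rfl fun t ht => ?_
    simp only [Finset.mem_range] at ht
    rw [if_pos (by omega)]
  have hvdm : ∑ t ∈ range (p + 1), I.choose t * (M - I).choose (p - t) = M.choose p := by
    have := Nat.add_choose_eq I (M - I) p
    rw [Finset.Nat.sum_antidiagonal_eq_sum_range_succ_mk] at this
    rw [← this]
    congr 1
    omega
  have h3 : ∑ t ∈ range (p + 1), (I.choose t * (M - I).choose (p - t) : ℝ) / (M.choose p : ℝ)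
      = (M.choose p : ℝ) / (M.choose p : ℝ) := by
    rw [← Finset.sum_div, ← hvdm]
    push_cast
    ring
  rw [h1, h2, h3, div_self]
  exact_mod_cast (Nat.choose_pos hp).ne'

/-- Hypergeometric CDF monotonicity in the population size: for
positive integers `N, I, p` with `N ≥ max{I, p}` and an integer `k ≥ 0` with
`N − k ≥ max{I, p}`, for every `r ≥ 0`,
`Σ_{t = max{0, p−(N−I)}}^{r} C(I,t)·C(N−I, p−t)/C(N,p)
   ≥ Σ_{t = max{0, p−(N−k−I)}}^{r} C(I,t)·C(N−k−I, p−t)/C(N−k, p)`.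
(Natural-number subtraction realizes the truncation `max{0, ·}`; the summand is `0` for
`t > p`, corresponding to `C(a, b) = 0` for `b < 0`.) -/
theorem hypergeometric_cdf_pos (N I p : ℕ) (hN : 1 ≤ N) (hI : 1 ≤ I) (hp : 1 ≤ p)
    (hIN : I ≤ N) (hpN : p ≤ N) (k : ℕ) (hIk : I ≤ N - k) (hpk : p ≤ N - k)
    (r : ℕ) :
    ∑ t ∈ Finset.Icc (p - (N - k - I)) r,
        (if t ≤ p then (Nat.choose I t * Nat.choose (N - k - I) (p - t) : ℝ) else 0) /
          (Nat.choose (N - k) p : ℝ) ≤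
      ∑ t ∈ Finset.Icc (p - (N - I)) r,
        (if t ≤ p then (Nat.choose I t * Nat.choose (N - I) (p - t) : ℝ) else 0) /
          (Nat.choose N p : ℝ) := by
  rcases lt_or_ge r p with hr | hr
  · rw [convert_sum (N - k) I p r hr, convert_sum N I p r hr]
    exact mono_pop I p r (N - k) hIk hpk hr N (by omega)
  · rw [full_sum (N - k) I p r hIk hpk hr, full_sum N I p r hIN hpN hr]
end

section
/- Let c, x, y be positive integers with y > x > c, and for t ∈ {0, 1, …, c} define f(t) = C(x+1, c−t)/C(y+1, c) − C(x, c−t)/C(y, c). Then there exists T ∈ {0, 1, …, c−1} such that f(t) ≥ 0 for all t ≤ T and f(t) < 0 for all t with T < t ≤ c. -/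
private lemma key_le (c x y k : ℕ) (hc : 1 ≤ c) (hcx : c < x) (hxy : x < y) (hk : k ≤ c)
    (h : c * (x + 1) ≤ k * (y + 1)) :
    x.choose k * (y + 1).choose c ≤ (x + 1).choose k * y.choose c := by
  have hA : x.choose k * (x + 1) = (x + 1).choose k * (x + 1 - k) :=
    Nat.choose_mul_succ_eq x k
  have hB : y.choose c * (y + 1) = (y + 1).choose c * (y + 1 - c) :=
    Nat.choose_mul_succ_eq y c
  have e1 : (x + 1) * (y + 1 - c) + (x + 1) * c = (x + 1) * (y + 1) := by
    rw [← Nat.mul_add]; congr 1; omega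
  have e2 : (x + 1 - k) * (y + 1) + k * (y + 1) = (x + 1) * (y + 1) := by
    rw [← Nat.add_mul]; congr 1; omega
  have hcm : c * (x + 1) = (x + 1) * c := Nat.mul_comm _ _
  have hineq : (x + 1 - k) * (y + 1) ≤ (x + 1) * (y + 1 - c) := by linarith
  have hpos : 0 < (x + 1 - k) * (y + 1) := by
    apply Nat.mul_pos <;> omega
  apply Nat.le_of_mul_le_mul_right _ hpos
  calc x.choose k * (y + 1).choose c * ((x + 1 - k) * (y + 1))
      ≤ x.choose k * (y + 1).choose c * ((x + 1) * (y + 1 - c)) := by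
        exact Nat.mul_le_mul_left _ hineq
    _ = (x.choose k * (x + 1)) * ((y + 1).choose c * (y + 1 - c)) := by ring
    _ = ((x + 1).choose k * (x + 1 - k)) * (y.choose c * (y + 1)) := by rw [hA, ← hB]
    _ = (x + 1).choose k * y.choose c * ((x + 1 - k) * (y + 1)) := by ring

private lemma key_lt (c x y k : ℕ) (hc : 1 ≤ c) (hcx : c < x) (hxy : x < y) (hk : k ≤ c)
    (h : k * (y + 1) < c * (x + 1)) :
    (x + 1).choose k * y.choose c < x.choose k * (y + 1).choose c := by
  have hA : x.choose k * (x + 1) = (x + 1).choose k * (x + 1 - k) :=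
    Nat.choose_mul_succ_eq x k
  have hB : y.choose c * (y + 1) = (y + 1).choose c * (y + 1 - c) :=
    Nat.choose_mul_succ_eq y c
  have e1 : (x + 1) * (y + 1 - c) + (x + 1) * c = (x + 1) * (y + 1) := by
    rw [← Nat.mul_add]; congr 1; omega
  have e2 : (x + 1 - k) * (y + 1) + k * (y + 1) = (x + 1) * (y + 1) := by
    rw [← Nat.add_mul]; congr 1; omega
  have hcm : c * (x + 1) = (x + 1) * c := Nat.mul_comm _ _
  have hineq : (x + 1) * (y + 1 - c) < (x + 1 - k) * (y + 1) := by linarith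
  have ha : 0 < x.choose k := Nat.choose_pos (by omega)
  have hBpos : 0 < (y + 1).choose c := Nat.choose_pos (by omega)
  have hfinal : (x + 1).choose k * y.choose c * ((x + 1 - k) * (y + 1)) <
      x.choose k * (y + 1).choose c * ((x + 1 - k) * (y + 1)) := by
    calc (x + 1).choose k * y.choose c * ((x + 1 - k) * (y + 1))
        = ((x + 1).choose k * (x + 1 - k)) * (y.choose c * (y + 1)) := by ring
      _ = (x.choose k * (x + 1)) * ((y + 1).choose c * (y + 1 - c)) := by rw [← hA, hB]
      _ = x.choose k * (y + 1).choose c * ((x + 1) * (y + 1 - c)) := by ring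
      _ < x.choose k * (y + 1).choose c * ((x + 1 - k) * (y + 1)) := by
          exact Nat.mul_lt_mul_of_pos_left hineq (Nat.mul_pos ha hBpos)
  exact Nat.lt_of_mul_lt_mul_right hfinal

/-- Let `c, x, y` be positive integers with `y > x > c` and for
`t ∈ {0,…,c}` set `f(t) = C(x+1, c−t)/C(y+1, c) − C(x, c−t)/C(y, c)`. Then there is
`T ∈ {0,…,c−1}` such that `f(t) ≥ 0` for `t ≤ T` and `f(t) < 0` for `T < t ≤ c`. -/
theorem binom_ratio_sign_change (c x y : ℕ) (hc : 1 ≤ c) (hcx : c < x) (hxy : x < y) :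
    ∃ T : ℕ, T ≤ c - 1 ∧
      (∀ t, t ≤ c → t ≤ T →
        0 ≤ (Nat.choose (x + 1) (c - t) : ℝ) / (Nat.choose (y + 1) c : ℝ) -
              (Nat.choose x (c - t) : ℝ) / (Nat.choose y c : ℝ)) ∧
      (∀ t, t ≤ c → T < t →
        (Nat.choose (x + 1) (c - t) : ℝ) / (Nat.choose (y + 1) c : ℝ) -
            (Nat.choose x (c - t) : ℝ) / (Nat.choose y c : ℝ) < 0) := by
  set q : ℕ := (c * (x + 1) + y) / (y + 1) with hq
  have hdm : (y + 1) * q + (c * (x + 1) + y) % (y + 1) = c * (x + 1) + y := by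
    rw [hq]; exact Nat.div_add_mod _ _
  have hmod : (c * (x + 1) + y) % (y + 1) ≤ y := by
    have := Nat.mod_lt (c * (x + 1) + y) (y := y + 1) (by omega); omega
  have hq1 : 1 ≤ q := by
    rw [hq]; apply Nat.le_div_iff_mul_le (by omega) |>.2; nlinarith
  have hqc : q ≤ c := by
    have : q < c + 1 := by
      rw [hq]
      apply Nat.div_lt_iff_lt_mul (by omega) |>.2
      nlinarith
    omega
  have hqmul : c * (x + 1) ≤ q * (y + 1) := by
    rw [Nat.mul_comm q]; omega
  have hqmul' : q * (y + 1) ≤ c * (x + 1) + y := by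
    rw [Nat.mul_comm q]; omega
  have hb0 : (0 : ℝ) < (y.choose c : ℝ) := by
    exact_mod_cast Nat.choose_pos (by omega)
  have hB0 : (0 : ℝ) < ((y + 1).choose c : ℝ) := by
    exact_mod_cast Nat.choose_pos (by omega)
  refine ⟨c - q, by omega, ?_, ?_⟩
  · intro t htc htT
    have hkq : q ≤ c - t := by omega
    have hmain : c * (x + 1) ≤ (c - t) * (y + 1) :=
      le_trans hqmul (Nat.mul_le_mul_right _ hkq)
    have hnat := key_le c x y (c - t) hc hcx hxy (by omega) hmain
    rw [sub_nonneg, div_le_div_iff₀ hb0 hB0]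
    exact_mod_cast hnat
  · intro t htc htT
    have hkq : c - t < q := by omega
    have hmain : (c - t) * (y + 1) < c * (x + 1) := by
      have h1 : (c - t) * (y + 1) + (y + 1) ≤ q * (y + 1) := by
        have h2 : c - t + 1 ≤ q := hkq
        calc (c - t) * (y + 1) + (y + 1) = (c - t + 1) * (y + 1) := by ring
          _ ≤ q * (y + 1) := Nat.mul_le_mul_right _ h2
      omega
    have hnat := key_lt c x y (c - t) hc hcx hxy (by omega) hmain
    rw [sub_neg, div_lt_div_iff₀ hB0 hb0]
    exact_mod_cast hnat
end
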